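/- Let T and T_h be bounded linear operators from X to Y, α > 0, i ≥ 1, and let x† ∈ X with y := Q y for Q the orthogonal projector onto the closure of Range(T), so that Q y = T x†. Let Q_h be the orthogonal projector onto the closure of Range(T_h). Define x_{α,i} := ∑_{k=1}^i α^{k-1}(T*T+αI)^{-k} T* y and x_{α,i}^h := ∑_{k=1}^i α^{k-1}(T_h*T_h+αI)^{-k} T_h* y. Then ‖x_{α,i} − x_{α,i}^h‖ ≤ i(i+1)‖T−T_h‖‖x†‖/(2√α) + i‖Q_h(I−Q)y‖/(2√α). -/

import Mathlib

/-!
Write `B = (T*T + α)⁻¹`, so that `x_{α,i+1} = B T*y + α B x_{α,i}`. The identity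
`‖T B x‖² + α ‖B x‖² = ⟪x, B x⟫` gives `‖α B‖ ≤ 1`, `‖B T*‖, ‖T B‖ ≤ 1/(2√α)` and `‖B T*T‖ ≤ 1`.
Since `T* y = T*T x†` and `Tₕ* y = Tₕ*T x† + Tₕ* z` with `z = Qₕ(I − Q)y`, the error
`eᵢ = x_{α,i} − x_{α,i}ʰ` satisfies
`e_{i+1} = (B T*T x† − Bₕ Tₕ*T x†) − Bₕ Tₕ* z + α (B − Bₕ) x_{α,i} + α Bₕ eᵢ`.
The resolvent identity `B − Bₕ = Bₕ (Tₕ*Tₕ − T*T) B` bounds the first and third terms by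
`‖T − Tₕ‖‖x†‖/√α` and `i ‖T − Tₕ‖‖x†‖/√α` (as `‖x_{α,i}‖ ≤ i ‖x†‖`), so each step adds at most
`(i + 1) ‖T − Tₕ‖‖x†‖/√α + ‖z‖/(2√α)` to the error.
-/

open ContinuousLinearMap

lemma le_div_two_sqrt_of_sq_add_mul_sq_le {a b c α : ℝ} (hα : 0 < α) (hc : 0 ≤ c)
    (h : a ^ 2 + α * b ^ 2 ≤ c * b) : a ≤ c / (2 * √α) := by
  have hs : 0 < √α := Real.sqrt_pos.mpr hα
  have hs2 : √α ^ 2 = α := Real.sq_sqrt hα.le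
  rw [le_div_iff₀ (by positivity)]
  nlinarith [sq_nonneg (c - 2 * α * b), sq_nonneg (a * (2 * √α) - c)]

lemma le_div_two_sqrt_of_sq_add_mul_sq_le' {a b c α : ℝ} (hα : 0 < α) (hc : 0 ≤ c)
    (h : a ^ 2 + α * b ^ 2 ≤ c * a) : b ≤ c / (2 * √α) := by
  have hs : 0 < √α := Real.sqrt_pos.mpr hα
  have hs2 : √α ^ 2 = α := Real.sq_sqrt hα.le
  rw [le_div_iff₀ (by positivity)]
  nlinarith [sq_nonneg (c - 2 * a), sq_nonneg (b * (2 * √α) - c)]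

/-- With `B = (T*T + αI)⁻¹`, `iteratedTikhonov B α (T* y) i` is the paper's `x_{α,i}`. -/
def iteratedTikhonov {X : Type*} [NormedAddCommGroup X] [NormedSpace ℝ X] (B : X →L[ℝ] X)
    (α : ℝ) (v : X) (i : ℕ) : X :=
  ∑ k ∈ Finset.range i, α ^ k • (B ^ (k + 1)) v

section IteratedTikhonov

variable {X : Type*} [NormedAddCommGroup X] [NormedSpace ℝ X] (B : X →L[ℝ] X) (α : ℝ) (v : X)

lemma iteratedTikhonov_zero : iteratedTikhonov B α v 0 = 0 :=
  Finset.sum_range_zero _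

lemma iteratedTikhonov_succ (i : ℕ) :
    iteratedTikhonov B α v (i + 1) = B v + α • B (iteratedTikhonov B α v i) := by
  rw [iteratedTikhonov, Finset.sum_range_succ', add_comm, pow_zero, one_smul, zero_add, pow_one,
    iteratedTikhonov, map_sum, Finset.smul_sum]
  congr 1
  refine Finset.sum_congr rfl fun k _ => ?_
  rw [pow_succ' α, pow_succ' B, mul_apply_eq_comp, map_smul, smul_smul]

end IteratedTikhonov

section Resolvent

variable {X Y : Type*} [NormedAddCommGroup X] [InnerProductSpace ℝ X] [CompleteSpace X]
  [NormedAddCommGroup Y] [InnerProductSpace ℝ Y] [CompleteSpace Y]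
  {T Th : X →L[ℝ] Y} {α : ℝ} {B Bh : X →L[ℝ] X}

lemma adjoint_apply_apply_add_smul_eq (h : (adjoint T ∘L T + α • 1) * B = 1) (x : X) :
    adjoint T (T (B x)) + α • B x = x := by
  simpa using congr($h x)

lemma apply_adjoint_apply_eq_sub (h : B * (adjoint T ∘L T + α • 1) = 1) (x : X) :
    B (adjoint T (T x)) = x - α • B x := by
  rw [eq_sub_iff_add_eq]
  simpa using congr($h x)

lemma norm_sq_apply_add_mul_norm_sq_eq_inner (h : (adjoint T ∘L T + α • 1) * B = 1) (x : X) :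
    ‖T (B x)‖ ^ 2 + α * ‖B x‖ ^ 2 = inner ℝ x (B x) := by
  have hx : inner ℝ x (B x) = inner ℝ (adjoint T (T (B x)) + α • B x) (B x) := by
    rw [adjoint_apply_apply_add_smul_eq h x]
  rw [hx, inner_add_left, real_inner_smul_left, adjoint_inner_left, real_inner_self_eq_norm_sq,
    real_inner_self_eq_norm_sq]

lemma norm_smul_apply_le (hα : 0 < α) (h : (adjoint T ∘L T + α • 1) * B = 1) (x : X) :
    ‖α • B x‖ ≤ ‖x‖ := by
  have key := norm_sq_apply_add_mul_norm_sq_eq_inner h x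
  have cs := real_inner_le_norm x (B x)
  rw [norm_smul, Real.norm_eq_abs, abs_of_pos hα]
  nlinarith [norm_nonneg (B x), norm_nonneg x, sq_nonneg ‖T (B x)‖, sq_nonneg (α * ‖B x‖ - ‖x‖)]

lemma norm_apply_adjoint_le (hα : 0 < α) (h : (adjoint T ∘L T + α • 1) * B = 1) (z : Y) :
    ‖B (adjoint T z)‖ ≤ ‖z‖ / (2 * √α) := by
  have key := norm_sq_apply_add_mul_norm_sq_eq_inner h (adjoint T z)
  rw [adjoint_inner_left] at key
  exact le_div_two_sqrt_of_sq_add_mul_sq_le' hα (norm_nonneg z)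
    (key.trans_le (real_inner_le_norm _ _))

lemma norm_map_apply_le (hα : 0 < α) (h : (adjoint T ∘L T + α • 1) * B = 1) (x : X) :
    ‖T (B x)‖ ≤ ‖x‖ / (2 * √α) := by
  have key := norm_sq_apply_add_mul_norm_sq_eq_inner h x
  exact le_div_two_sqrt_of_sq_add_mul_sq_le hα (norm_nonneg x)
    (key.trans_le (real_inner_le_norm _ _))

lemma norm_apply_adjoint_apply_le (hα : 0 < α) (h₁ : B * (adjoint T ∘L T + α • 1) = 1)
    (h₂ : (adjoint T ∘L T + α • 1) * B = 1) (x : X) :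
    ‖B (adjoint T (T x))‖ ≤ ‖x‖ := by
  have key := norm_sq_apply_add_mul_norm_sq_eq_inner h₂ x
  have expand : ‖x - α • B x‖ ^ 2 = ‖x‖ ^ 2 - 2 * α * inner ℝ x (B x) + α ^ 2 * ‖B x‖ ^ 2 := by
    rw [norm_sub_sq_real, real_inner_smul_right, norm_smul, Real.norm_eq_abs, mul_pow, sq_abs]
    ring
  rw [apply_adjoint_apply_eq_sub h₁]
  refine le_of_pow_le_pow_left₀ two_ne_zero (norm_nonneg x) ?_
  nlinarith [sq_nonneg ‖T (B x)‖, sq_nonneg ‖B x‖]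

lemma norm_iteratedTikhonov_adjoint_apply_le (hα : 0 < α)
    (hB₁ : B * (adjoint T ∘L T + α • 1) = 1) (hB₂ : (adjoint T ∘L T + α • 1) * B = 1) (x : X)
    (i : ℕ) : ‖iteratedTikhonov B α (adjoint T (T x)) i‖ ≤ i * ‖x‖ := by
  induction i with
  | zero => simp [iteratedTikhonov_zero]
  | succ i ih =>
    rw [iteratedTikhonov_succ, Nat.cast_succ, add_one_mul, add_comm _ ‖x‖]
    exact (norm_add_le _ _).trans
      (add_le_add (norm_apply_adjoint_apply_le hα hB₁ hB₂ x) ((norm_smul_apply_le hα hB₂ _).trans ih))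

lemma apply_sub_apply_eq (hB₂ : (adjoint T ∘L T + α • 1) * B = 1)
    (hBh₁ : Bh * (adjoint Th ∘L Th + α • 1) = 1) (x : X) :
    B x - Bh x = Bh (adjoint Th ((Th - T) (B x))) + Bh (adjoint (Th - T) (T (B x))) := by
  have hBx : Bh (adjoint Th (Th (B x))) + α • Bh (B x) = B x := by simpa using congr($hBh₁ (B x))
  have hx : Bh (adjoint T (T (B x))) + α • Bh (B x) = Bh x := by
    rw [← map_smul, ← map_add, adjoint_apply_apply_add_smul_eq hB₂ x]
  rw [map_sub adjoint]
  simp only [sub_apply, map_sub]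
  linear_combination (norm := module) hx - hBx

lemma norm_smul_apply_sub_apply_le (hα : 0 < α) (hB₂ : (adjoint T ∘L T + α • 1) * B = 1)
    (hBh₁ : Bh * (adjoint Th ∘L Th + α • 1) = 1) (hBh₂ : (adjoint Th ∘L Th + α • 1) * Bh = 1)
    (x : X) : ‖α • (B x - Bh x)‖ ≤ ‖T - Th‖ * ‖x‖ / √α := by
  rw [apply_sub_apply_eq hB₂ hBh₁, smul_add, ← map_smul, ← map_smul, ← map_smul]
  have first : ‖Bh (adjoint Th ((Th - T) (α • B x)))‖ ≤ ‖T - Th‖ * ‖x‖ / (2 * √α) := by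
    refine (norm_apply_adjoint_le hα hBh₂ _).trans (div_le_div_of_nonneg_right ?_ (by positivity))
    rw [← norm_sub_rev]
    exact ((Th - T).le_opNorm _).trans
      (mul_le_mul_of_nonneg_left (norm_smul_apply_le hα hB₂ x) (norm_nonneg _))
  have second : ‖α • Bh (adjoint (Th - T) (T (B x)))‖ ≤ ‖T - Th‖ * ‖x‖ / (2 * √α) := by
    refine (norm_smul_apply_le hα hBh₂ _).trans (((adjoint (Th - T)).le_opNorm _).trans ?_)
    rw [LinearIsometryEquiv.norm_map, norm_sub_rev, mul_div_assoc]
    exact mul_le_mul_of_nonneg_left (norm_map_apply_le hα hB₂ x) (norm_nonneg _)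
  calc _ ≤ _ := norm_add_le _ _
    _ ≤ _ := add_le_add first second
    _ = ‖T - Th‖ * ‖x‖ / √α := by ring

/-- Rearranged with `B (T*T w) = w - α B w` so that the `(Tₕ - T)*` term only sees `T B w`,
of size `‖w‖/(2√α)`; the plain resolvent identity would lose a factor `3/2`. -/
lemma apply_adjoint_apply_sub_apply_adjoint_apply_eq (hB₁ : B * (adjoint T ∘L T + α • 1) = 1)
    (hB₂ : (adjoint T ∘L T + α • 1) * B = 1) (hBh₁ : Bh * (adjoint Th ∘L Th + α • 1) = 1)
    (w : X) :
    B (adjoint T (T w)) - Bh (adjoint Th (T w)) =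
      Bh (adjoint Th ((Th - T) (B (adjoint T (T w))))) - α • Bh (adjoint (Th - T) (T (B w))) := by
  have hres := apply_sub_apply_eq hB₂ hBh₁ (adjoint T (T w))
  have hcross : Bh (adjoint (Th - T) (T (B (adjoint T (T w))))) + Bh (adjoint T (T w)) -
      Bh (adjoint Th (T w)) = -(α • Bh (adjoint (Th - T) (T (B w)))) := by
    rw [apply_adjoint_apply_eq_sub hB₁ w, map_sub adjoint]
    simp only [map_sub, sub_apply, map_smul]
    abel
  linear_combination (norm := module) hres + hcross

lemma norm_apply_adjoint_apply_sub_apply_adjoint_apply_le (hα : 0 < α)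
    (hB₁ : B * (adjoint T ∘L T + α • 1) = 1) (hB₂ : (adjoint T ∘L T + α • 1) * B = 1)
    (hBh₁ : Bh * (adjoint Th ∘L Th + α • 1) = 1) (hBh₂ : (adjoint Th ∘L Th + α • 1) * Bh = 1)
    (w : X) : ‖B (adjoint T (T w)) - Bh (adjoint Th (T w))‖ ≤ ‖T - Th‖ * ‖w‖ / √α := by
  rw [apply_adjoint_apply_sub_apply_adjoint_apply_eq hB₁ hB₂ hBh₁]
  have first : ‖Bh (adjoint Th ((Th - T) (B (adjoint T (T w)))))‖ ≤
      ‖T - Th‖ * ‖w‖ / (2 * √α) := by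
    refine (norm_apply_adjoint_le hα hBh₂ _).trans (div_le_div_of_nonneg_right ?_ (by positivity))
    rw [← norm_sub_rev]
    exact ((Th - T).le_opNorm _).trans
      (mul_le_mul_of_nonneg_left (norm_apply_adjoint_apply_le hα hB₁ hB₂ w) (norm_nonneg _))
  have second : ‖α • Bh (adjoint (Th - T) (T (B w)))‖ ≤ ‖T - Th‖ * ‖w‖ / (2 * √α) := by
    refine (norm_smul_apply_le hα hBh₂ _).trans (((adjoint (Th - T)).le_opNorm _).trans ?_)
    rw [LinearIsometryEquiv.norm_map, norm_sub_rev, mul_div_assoc]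
    exact mul_le_mul_of_nonneg_left (norm_map_apply_le hα hB₂ w) (norm_nonneg _)
  calc _ ≤ _ := norm_sub_le _ _
    _ ≤ _ := add_le_add first second
    _ = ‖T - Th‖ * ‖w‖ / √α := by ring

lemma norm_iteratedTikhonov_sub_iteratedTikhonov_le (hα : 0 < α)
    (hB₁ : B * (adjoint T ∘L T + α • 1) = 1) (hB₂ : (adjoint T ∘L T + α • 1) * B = 1)
    (hBh₁ : Bh * (adjoint Th ∘L Th + α • 1) = 1) (hBh₂ : (adjoint Th ∘L Th + α • 1) * Bh = 1)
    (x : X) (z : Y) (i : ℕ) :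
    ‖iteratedTikhonov B α (adjoint T (T x)) i -
        iteratedTikhonov Bh α (adjoint Th (T x) + adjoint Th z) i‖ ≤
      i * (i + 1) * ‖T - Th‖ * ‖x‖ / (2 * √α) + i * ‖z‖ / (2 * √α) := by
  induction i with
  | zero => simp [iteratedTikhonov_zero]
  | succ i ih =>
    set xi := iteratedTikhonov B α (adjoint T (T x)) i
    set xhi := iteratedTikhonov Bh α (adjoint Th (T x) + adjoint Th z) i
    have error_succ : iteratedTikhonov B α (adjoint T (T x)) (i + 1) -
        iteratedTikhonov Bh α (adjoint Th (T x) + adjoint Th z) (i + 1) =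
          (B (adjoint T (T x)) - Bh (adjoint Th (T x))) - Bh (adjoint Th z) +
            α • (B xi - Bh xi) + α • Bh (xi - xhi) := by
      rw [iteratedTikhonov_succ, iteratedTikhonov_succ, map_add, map_sub]
      module
    have hxi : ‖α • (B xi - Bh xi)‖ ≤ ‖T - Th‖ * ((i : ℝ) * ‖x‖) / √α :=
      (norm_smul_apply_sub_apply_le hα hB₂ hBh₁ hBh₂ xi).trans (by
        gcongr; exact norm_iteratedTikhonov_adjoint_apply_le hα hB₁ hB₂ x i)
    rw [error_succ]
    calc _ ≤ ‖T - Th‖ * ‖x‖ / √α + ‖z‖ / (2 * √α) + ‖T - Th‖ * ((i : ℝ) * ‖x‖) / √α +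
            ((i : ℝ) * (i + 1) * ‖T - Th‖ * ‖x‖ / (2 * √α) + i * ‖z‖ / (2 * √α)) :=
        (norm_add_le _ _).trans <| add_le_add ((norm_add_le _ _).trans <| add_le_add
          ((norm_sub_le _ _).trans <| add_le_add
            (norm_apply_adjoint_apply_sub_apply_adjoint_apply_le hα hB₁ hB₂ hBh₁ hBh₂ x)
            (norm_apply_adjoint_le hα hBh₂ z)) hxi)
          ((norm_smul_apply_le hα hBh₂ _).trans ih)
      _ = _ := by push_cast; ring

lemma adjoint_starProjection_closure_range (T : X →L[ℝ] Y) (w : Y) :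
    adjoint T ((LinearMap.range (T : X →ₗ[ℝ] Y)).topologicalClosure.starProjection w) =
      adjoint T w := by
  have hperp :=
    (LinearMap.range (T : X →ₗ[ℝ] Y)).topologicalClosure.sub_starProjection_mem_orthogonal w
  rw [Submodule.orthogonal_closure, orthogonal_range, LinearMap.mem_ker, map_sub,
    sub_eq_zero] at hperp
  exact hperp.symm

end Resolvent

open ContinuousLinearMap in
theorem iterated_tikhonov_operator_perturbation_bound_general
    {X Y : Type*} [NormedAddCommGroup X] [InnerProductSpace ℝ X] [CompleteSpace X]
    [NormedAddCommGroup Y] [InnerProductSpace ℝ Y] [CompleteSpace Y]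
    (T Th : X →L[ℝ] Y) (α : ℝ) (hα : 0 < α) (i : ℕ)
    (y : Y) (xdag : X)
    (Q Qh : Y →L[ℝ] Y)
    (hQ : Q = (LinearMap.range (T : X →ₗ[ℝ] Y)).topologicalClosure.subtypeL ∘L
      Submodule.orthogonalProjectionOnto (LinearMap.range (T : X →ₗ[ℝ] Y)).topologicalClosure)
    (hQh : Qh = (LinearMap.range (Th : X →ₗ[ℝ] Y)).topologicalClosure.subtypeL ∘L
      Submodule.orthogonalProjectionOnto (LinearMap.range (Th : X →ₗ[ℝ] Y)).topologicalClosure)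
    (hxdag : T xdag = Q y)
    (B Bh : X →L[ℝ] X)
    (hB₁ : B * (adjoint T ∘L T + α • 1) = 1)
    (hB₂ : (adjoint T ∘L T + α • 1) * B = 1)
    (hBh₁ : Bh * (adjoint Th ∘L Th + α • 1) = 1)
    (hBh₂ : (adjoint Th ∘L Th + α • 1) * Bh = 1) :
    ‖(∑ k ∈ Finset.range i, α ^ k • (B ^ (k + 1)) (adjoint T y)) -
      ∑ k ∈ Finset.range i, α ^ k • (Bh ^ (k + 1)) (adjoint Th y)‖ ≤
      (i : ℝ) * (i + 1) * ‖T - Th‖ * ‖xdag‖ / (2 * Real.sqrt α) +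
        (i : ℝ) * ‖Qh ((1 - Q) y)‖ / (2 * Real.sqrt α) := by
  have hQ' : Q = (LinearMap.range (T : X →ₗ[ℝ] Y)).topologicalClosure.starProjection := hQ
  have hQh' : Qh = (LinearMap.range (Th : X →ₗ[ℝ] Y)).topologicalClosure.starProjection := hQh
  have hTy : adjoint T y = adjoint T (T xdag) := by
    rw [hxdag, hQ', adjoint_starProjection_closure_range]
  have hThy : adjoint Th y = adjoint Th (T xdag) + adjoint Th (Qh ((1 - Q) y)) := by
    rw [hQh', adjoint_starProjection_closure_range, ← map_add, hxdag]
    simp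
  rw [hTy, hThy]
  exact norm_iteratedTikhonov_sub_iteratedTikhonov_le hα hB₁ hB₂ hBh₁ hBh₂ xdag _ i

open ContinuousLinearMap in
/-- Lemma A.1 of the paper: for bounded operators `T, Tₕ : X → Y` between Hilbert spaces,
with `Q` and `Qₕ` the orthogonal projections onto the closures of `Range T` and
`Range Tₕ`, and `x†` satisfying `T x† = Q y`, the iterated Tikhonov approximations built
from `T` and `Tₕ` satisfy
`‖x_{α,i} − x_{α,i}ʰ‖ ≤ i(i+1)‖T−Tₕ‖‖x†‖/(2√α) + i‖Qₕ(I−Q)y‖/(2√α)`. -/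
theorem iterated_tikhonov_operator_perturbation_bound
    {X Y : Type*} [NormedAddCommGroup X] [InnerProductSpace ℝ X] [CompleteSpace X]
    [NormedAddCommGroup Y] [InnerProductSpace ℝ Y] [CompleteSpace Y]
    (T Th : X →L[ℝ] Y) (α : ℝ) (hα : 0 < α) (i : ℕ) (hi : 1 ≤ i)
    (y : Y) (xdag : X)
    (Q Qh : Y →L[ℝ] Y)
    (hQ : Q = (LinearMap.range (T : X →ₗ[ℝ] Y)).topologicalClosure.subtypeL ∘L
      Submodule.orthogonalProjectionOnto (LinearMap.range (T : X →ₗ[ℝ] Y)).topologicalClosure)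
    (hQh : Qh = (LinearMap.range (Th : X →ₗ[ℝ] Y)).topologicalClosure.subtypeL ∘L
      Submodule.orthogonalProjectionOnto (LinearMap.range (Th : X →ₗ[ℝ] Y)).topologicalClosure)
    (hxdag : T xdag = Q y)
    (B Bh : X →L[ℝ] X)
    (hB₁ : B * (adjoint T ∘L T + α • 1) = 1)
    (hB₂ : (adjoint T ∘L T + α • 1) * B = 1)
    (hBh₁ : Bh * (adjoint Th ∘L Th + α • 1) = 1)
    (hBh₂ : (adjoint Th ∘L Th + α • 1) * Bh = 1) :
    ‖(∑ k ∈ Finset.range i, α ^ k • (B ^ (k + 1)) (adjoint T y)) -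
      ∑ k ∈ Finset.range i, α ^ k • (Bh ^ (k + 1)) (adjoint Th y)‖ ≤
      (i : ℝ) * (i + 1) * ‖T - Th‖ * ‖xdag‖ / (2 * Real.sqrt α) +
        (i : ℝ) * ‖Qh ((1 - Q) y)‖ / (2 * Real.sqrt α) :=
  iterated_tikhonov_operator_perturbation_bound_general T Th α hα i y xdag Q Qh hQ hQh hxdag B Bh
    hB₁ hB₂ hBh₁ hBh₂
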